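/- Generation lemma for abstractions: if Γ ⊢ λx.t : T, then there exist types T₁,…,Tₙ, R₁,…,Rₙ, unit types U₁,…,Uₙ, scalars α₁,…,αₙ and sets of type variables 𝒱₁,…,𝒱ₙ such that T ≡ Σᵢ₌₁ⁿ αᵢ·Tᵢ, Σᵢ₌₁ⁿ αᵢ = 1, and for all i ∈ {1,…,n}: Γ, x:Uᵢ ⊢ t : Rᵢ and Uᵢ→Rᵢ ⪯_{𝒱ᵢ,Γ} Tᵢ. -/

import Mathlib

/- Types of λvec_R: general types and unit types (mutual) -/
mutual
inductive UTy (S : Type) : Type where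
  | uvar : ℕ → UTy S
  | arrow : UTy S → Ty S → UTy S
  | fallU : ℕ → UTy S → UTy S
  | fallG : ℕ → UTy S → UTy S
inductive Ty (S : Type) : Type where
  | unit : UTy S → Ty S
  | smul : S → Ty S → Ty S
  | add : Ty S → Ty S → Ty S
  | gvar : ℕ → Ty S
end

/- Type equivalence: the smallest congruence with the weak-module axioms -/
mutual
inductive UEquiv {S : Type} [CommRing S] : UTy S → UTy S → Prop where
  | refl (U : UTy S) : UEquiv U U
  | symm : UEquiv U V → UEquiv V U
  | trans : UEquiv U V → UEquiv V W → UEquiv U W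
  | arrow : UEquiv U V → TEquiv T R → UEquiv (.arrow U T) (.arrow V R)
  | fallU : UEquiv U V → UEquiv (.fallU X U) (.fallU X V)
  | fallG : UEquiv U V → UEquiv (.fallG X U) (.fallG X V)
inductive TEquiv {S : Type} [CommRing S] : Ty S → Ty S → Prop where
  | refl (T : Ty S) : TEquiv T T
  | symm : TEquiv T R → TEquiv R T
  | trans : TEquiv T R → TEquiv R P → TEquiv T P
  | unit : UEquiv U V → TEquiv (.unit U) (.unit V)
  | smul : TEquiv T R → TEquiv (.smul a T) (.smul a R)
  | addL : TEquiv T R → TEquiv (.add T P) (.add R P)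
  | addR : TEquiv T R → TEquiv (.add P T) (.add P R)
  | one_smul (T : Ty S) : TEquiv (.smul 1 T) T
  | smul_smul : TEquiv (.smul a (.smul b T)) (.smul (a*b) T)
  | smul_add : TEquiv (.add (.smul a T) (.smul a R)) (.smul a (.add T R))
  | add_smul : TEquiv (.add (.smul a T) (.smul b T)) (.smul (a+b) T)
  | comm : TEquiv (.add T R) (.add R T)
  | assoc : TEquiv (.add T (.add R P)) (.add (.add T R) P)
end

/- substitution of a unit type variable by a unit type -/
mutual
def UTy.substU {S : Type} : UTy S → ℕ → UTy S → UTy S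
  | .uvar m, X, A => if m = X then A else .uvar m
  | .arrow U T, X, A => .arrow (U.substU X A) (T.substU X A)
  | .fallU m U, X, A => if m = X then .fallU m U else .fallU m (U.substU X A)
  | .fallG m U, X, A => .fallG m (U.substU X A)
def Ty.substU {S : Type} : Ty S → ℕ → UTy S → Ty S
  | .unit U, X, A => .unit (U.substU X A)
  | .smul a T, X, A => .smul a (T.substU X A)
  | .add T R, X, A => .add (T.substU X A) (R.substU X A)
  | .gvar m, _, _ => .gvar m
end

/- substitution of a general type variable by a general type -/
mutual
def UTy.substG {S : Type} : UTy S → ℕ → Ty S → UTy S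
  | .uvar m, _, _ => .uvar m
  | .arrow U T, X, A => .arrow (U.substG X A) (T.substG X A)
  | .fallU m U, X, A => .fallU m (U.substG X A)
  | .fallG m U, X, A => if m = X then .fallG m U else .fallG m (U.substG X A)
def Ty.substG {S : Type} : Ty S → ℕ → Ty S → Ty S
  | .unit U, X, A => .unit (U.substG X A)
  | .smul a T, X, A => .smul a (T.substG X A)
  | .add T R, X, A => .add (T.substG X A) (R.substG X A)
  | .gvar m, X, A => if m = X then A else .gvar m
end

/- free type variables; a variable is (false, n) for a unit variable X_n
   and (true, n) for a general variable 𝕏_n -/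
mutual
def UTy.fv {S : Type} : UTy S → Set (Bool × ℕ)
  | .uvar n => {(false, n)}
  | .arrow U T => U.fv ∪ T.fv
  | .fallU n U => U.fv \ {(false, n)}
  | .fallG n U => U.fv \ {(true, n)}
def Ty.fv {S : Type} : Ty S → Set (Bool × ℕ)
  | .unit U => U.fv
  | .smul _ T => T.fv
  | .add T R => T.fv ∪ R.fv
  | .gvar n => {(true, n)}
end
/- a single substitution item: a type variable together with a type of the matching kind -/
inductive TSub (S : Type) : Type where
  | u : ℕ → UTy S → TSub S
  | g : ℕ → Ty S → TSub S

def TSub.var {S : Type} : TSub S → Bool × ℕ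
  | .u X _ => (false, X)
  | .g X _ => (true, X)

def Ty.applySub {S : Type} : Ty S → TSub S → Ty S
  | T, .u X A => T.substU X A
  | T, .g X A => T.substG X A

def UTy.applySub {S : Type} : UTy S → TSub S → UTy S
  | U, .u X A => U.substU X A
  | U, .g X A => U.substG X A

def Ty.applySubs {S : Type} (T : Ty S) (σ : List (TSub S)) : Ty S := σ.foldl Ty.applySub T
def UTy.applySubs {S : Type} (U : UTy S) (σ : List (TSub S)) : UTy S := σ.foldl UTy.applySub U

/- ∀X.U for a variable of either kind, and iterated foralls -/
def mkForall {S : Type} (X : Bool × ℕ) (U : UTy S) : UTy S :=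
  if X.1 then .fallG X.2 U else .fallU X.2 U
def mkForalls {S : Type} (Xs : List (Bool × ℕ)) (U : UTy S) : UTy S := Xs.foldr mkForall U

/- the linear combination Σᵢ αᵢ·Tᵢ represented by a (nonempty) list of pairs -/
def combo {S : Type} : List (S × Ty S) → Ty S
  | [] => .gvar 0
  | [p] => .smul p.1 p.2
  | p :: q :: L => .add (.smul p.1 p.2) (combo (q :: L))

/- sum of the scalars of a linear combination -/
def weightOf {S : Type} [CommRing S] {α : Type} (L : List (S × α)) : S := (L.map Prod.fst).sum

/- Terms of λvec_R -/
inductive Term (S : Type) : Type where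
  | var : ℕ → Term S
  | lam : ℕ → Term S → Term S
  | app : Term S → Term S → Term S
  | smul : S → Term S → Term S
  | add : Term S → Term S → Term S

/- basis terms: variables and abstractions -/
inductive IsBasis {S : Type} : Term S → Prop where
  | var : IsBasis (.var x)
  | lam : IsBasis (.lam x t)

def Term.fv {S : Type} : Term S → Set ℕ
  | .var x => {x}
  | .lam x t => t.fv \ {x}
  | .app t r => t.fv ∪ r.fv
  | .smul _ t => t.fv
  | .add t r => t.fv ∪ r.fv

/- term substitution t[b/x] -/
def Term.subst {S : Type} : Term S → ℕ → Term S → Term S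
  | .var y, x, b => if y = x then b else .var y
  | .lam y t, x, b => if y = x then .lam y t else .lam y (t.subst x b)
  | .app t r, x, b => .app (t.subst x b) (r.subst x b)
  | .smul a t, x, b => .smul a (t.subst x b)
  | .add t r, x, b => .add (t.subst x b) (r.subst x b)

/- typing contexts: partial maps from term variables to unit types -/
def Ctx (S : Type) : Type := ℕ → Option (UTy S)

def Ctx.update {S : Type} (Γ : Ctx S) (x : ℕ) (U : UTy S) : Ctx S :=
  fun y => if y = x then some U else Γ y

def Ctx.fv {S : Type} (Γ : Ctx S) : Set (Bool × ℕ) :=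
  {v | ∃ x U, Γ x = some U ∧ v ∈ UTy.fv U}

def Ctx.applySub {S : Type} (Γ : Ctx S) (s : TSub S) : Ctx S :=
  fun x => (Γ x).map (fun U => U.applySub s)
/- Sized typing judgement: `TypesN n Γ t T` means Γ ⊢ t : T has a derivation
   with n sequents. -/
inductive TypesN {S : Type} [CommRing S] : ℕ → Ctx S → Term S → Ty S → Prop where
  | ax : Γ x = some U → TypesN 1 Γ (.var x) (.unit U)
  | equiv : TypesN n Γ t T → TEquiv T R → TypesN (n+1) Γ t R
  | arrI : TypesN n (Γ.update x U) t T → TypesN (n+1) Γ (.lam x t) (.unit (.arrow U T))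
  | arrE (Xs : List (Bool × ℕ)) (U : UTy S) (L : List (S × Ty S)) (M : List (S × List (TSub S))) :
      L ≠ [] → M ≠ [] →
      (∀ q ∈ M, q.2.map TSub.var = Xs) →
      TypesN n Γ t (combo (L.map fun p => (p.1, Ty.unit (mkForalls Xs (.arrow U p.2))))) →
      TypesN m Γ r (combo (M.map fun q => (q.1, (Ty.unit U).applySubs q.2))) →
      TypesN (n+m+1) Γ (.app t r)
        (combo (L.flatMap fun p => M.map fun q => (p.1 * q.1, p.2.applySubs q.2)))
  | fallI (L : List (S × UTy S)) (X : Bool × ℕ) :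
      L ≠ [] → X ∉ Γ.fv →
      TypesN n Γ t (combo (L.map fun p => (p.1, Ty.unit p.2))) →
      TypesN (n+1) Γ t (combo (L.map fun p => (p.1, Ty.unit (mkForall X p.2))))
  | fallE (L : List (S × UTy S)) (s : TSub S) :
      L ≠ [] →
      TypesN n Γ t (combo (L.map fun p => (p.1, Ty.unit (mkForall s.var p.2)))) →
      TypesN (n+1) Γ t (combo (L.map fun p => (p.1, (Ty.unit p.2).applySub s)))
  | addI : TypesN n Γ t T → TypesN m Γ r R → TypesN (n+m+1) Γ (.add t r) (.add T R)
  | oneE : TypesN n Γ (.smul 1 t) T → TypesN (n+1) Γ t T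
  | sum (L : List (ℕ × S × Ty S)) :
      L ≠ [] →
      (∀ p ∈ L, TypesN p.1 Γ t p.2.2) →
      TypesN ((L.map Prod.fst).sum + 1) Γ (.smul (weightOf (L.map Prod.snd)) t)
        (combo (L.map Prod.snd))

/- the typing judgement Γ ⊢ t : T -/
def Types {S : Type} [CommRing S] (Γ : Ctx S) (t : Term S) (T : Ty S) : Prop :=
  ∃ n, TypesN n Γ t T

/- the relation ≺_{X,Γ} -/
inductive Prec {S : Type} [CommRing S] (Γ : Ctx S) : (Bool × ℕ) → Ty S → Ty S → Prop where
  | intro (X : Bool × ℕ) (L : List (S × UTy S)) :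
      X ∉ Γ.fv → L ≠ [] →
      TEquiv R (combo (L.map fun p => (p.1, Ty.unit p.2))) →
      TEquiv T (combo (L.map fun p => (p.1, Ty.unit (mkForall X p.2)))) →
      Prec Γ X R T
  | elim (s : TSub S) (L : List (S × UTy S)) :
      s.var ∉ Γ.fv → L ≠ [] →
      TEquiv R (combo (L.map fun p => (p.1, Ty.unit (mkForall s.var p.2)))) →
      TEquiv T (combo (L.map fun p => (p.1, (Ty.unit p.2).applySub s))) →
      Prec Γ s.var R T

/- the relation ⪯_{𝒱,Γ} -/
inductive Preceq {S : Type} [CommRing S] (Γ : Ctx S) : Set (Bool × ℕ) → Ty S → Ty S → Prop where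
  | prec : V ∩ Γ.fv = ∅ → Prec Γ X R T → Preceq Γ (V ∪ {X}) R T
  | trans : Preceq Γ V₁ A B → Preceq Γ V₂ B C → Preceq Γ (V₁ ∪ V₂) A C
  | equiv : V ∩ Γ.fv = ∅ → TEquiv R T → Preceq Γ V R T

/- the reduction relation → -/
inductive Step {S : Type} [CommRing S] : Term S → Term S → Prop where
  -- Group E
  | oneSmul : Step (.smul 1 t) t
  | smulSmul : Step (.smul a (.smul b t)) (.smul (a*b) t)
  | smulAdd : Step (.smul a (.add t r)) (.add (.smul a t) (.smul a r))
  -- Group F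
  | factor : Step (.add (.smul a t) (.smul b t)) (.smul (a+b) t)
  | factorOne : Step (.add (.smul a t) t) (.smul (a+1) t)
  | factorNone : Step (.add t t) (.smul (1+1) t)
  -- Group B
  | beta : IsBasis b → Step (.app (.lam x t) b) (t.subst x b)
  -- Group A
  | appAddL : Step (.app (.add t r) u) (.add (.app t u) (.app r u))
  | appAddR : Step (.app t (.add r u)) (.add (.app t r) (.app t u))
  | appSmulL : Step (.app (.smul a t) r) (.smul a (.app t r))
  | appSmulR : Step (.app t (.smul a r)) (.smul a (.app t r))
  -- contextual rules
  | ctxSmul : Step t r → Step (.smul a t) (.smul a r)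
  | ctxAddR : Step t r → Step (.add u t) (.add u r)
  | ctxAppR : Step t r → Step (.app u t) (.app u r)
  | ctxAppL : Step t r → Step (.app t u) (.app r u)
  | ctxLam : Step t r → Step (.lam x t) (.lam x r)

/- values: sums (in any association) of pairwise-distinct abstractions, possibly scaled -/
inductive SumOf {S : Type} : Term S → List (Term S) → Prop where
  | leaf (t : Term S) : SumOf t [t]
  | add : SumOf t L → SumOf r M → SumOf (.add t r) (L ++ M)

inductive VEntry {S : Type} : Term S → Prop where
  | lam : VEntry (.lam x t)
  | smul : VEntry (.smul a (.lam x t))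

def lamOf {S : Type} : Term S → Term S
  | .smul _ b => b
  | b => b

def IsValue {S : Type} (t : Term S) : Prop :=
  ∃ L : List (Term S), SumOf t L ∧ (∀ e ∈ L, VEntry e) ∧ (L.map lamOf).Pairwise (· ≠ ·)

/- weight of types and of terms -/
def Ty.weight {S : Type} [CommRing S] : Ty S → S
  | .unit _ => 1
  | .gvar _ => 1
  | .smul a T => a * T.weight
  | .add T R => T.weight + R.weight

def Term.weight {S : Type} [CommRing S] : Term S → S
  | .var _ => 1
  | .lam _ _ => 1
  | .app _ _ => 1
  | .smul a t => a * t.weight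
  | .add t r => t.weight + r.weight

/-! Induct on the derivation, over `λx.t` and its prefixes `1·…·1·λx.t` (through which `(1E)` and
`(S)` can pass), keeping a decomposition `T ≡ Σᵢ αᵢ·Wᵢ` with `Σᵢ αᵢ = 1` in which every unit type
`Wᵢ` is reached by `⪯` from the type `U → R` of an `(→I)` conclusion and has its outer binders
outside `FV(Γ)`. At `(∀I)` and `(∀E)` the premise type `Σⱼ βⱼ·Vⱼ` is `≡ Σᵢ αᵢ·Wᵢ`; the set of unit
types occurring in a type and its weight are both `≡`-invariant, so every `Vⱼ` is `≡` some `Wᵢ`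
and `Σⱼ βⱼ = Σᵢ αᵢ`, and one further `≺` step carries the invariant to `∀X.Vⱼ`, resp. `Vⱼ[A/X]`.
At `(S)` the decompositions of the premises, scaled, are concatenated. -/

section

variable {S : Type}

theorem combo_cons (p : S × Ty S) {L : List (S × Ty S)} (hL : L ≠ []) :
    combo (p :: L) = .add (.smul p.1 p.2) (combo L) := by
  cases L with
  | nil => contradiction
  | cons => rfl

def unitCombo (K : List (S × UTy S)) : Ty S := combo (K.map fun p => (p.1, .unit p.2))

theorem unitCombo_map_snd (f : UTy S → UTy S) (K : List (S × UTy S)) :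
    unitCombo (K.map fun p => (p.1, f p.2)) = combo (K.map fun p => (p.1, .unit (f p.2))) := by
  simp [unitCombo, Function.comp_def]

theorem applySub_unit (U : UTy S) (s : TSub S) :
    (Ty.unit U).applySub s = .unit (U.applySub s) := by
  cases s <;> rfl

inductive BindersFresh (F : Set (Bool × ℕ)) : UTy S → Prop where
  | arrow {V : UTy S} {T : Ty S} : BindersFresh F (.arrow V T)
  | fallU {X : ℕ} {U : UTy S} : (false, X) ∉ F → BindersFresh F U → BindersFresh F (.fallU X U)
  | fallG {X : ℕ} {U : UTy S} : (true, X) ∉ F → BindersFresh F U → BindersFresh F (.fallG X U)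

namespace BindersFresh

variable {F : Set (Bool × ℕ)} {U : UTy S}

theorem of_mkForall {X : Bool × ℕ} (h : BindersFresh F (mkForall X U)) :
    X ∉ F ∧ BindersFresh F U := by
  obtain ⟨_ | _, n⟩ := X <;> cases h <;> constructor <;> assumption

theorem mkForall {X : Bool × ℕ} (hX : X ∉ F) (h : BindersFresh F U) :
    BindersFresh F (mkForall X U) := by
  obtain ⟨_ | _, n⟩ := X
  exacts [.fallU hX h, .fallG hX h]

theorem applySub (h : BindersFresh F U) (s : TSub S) : BindersFresh F (U.applySub s) := by
  cases s with
  | u Y A =>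
    induction h with
    | arrow => exact .arrow
    | fallU hX hU ih =>
      simp only [UTy.applySub, UTy.substU] at ih ⊢
      split_ifs
      exacts [.fallU hX hU, .fallU hX ih]
    | fallG hX _ ih => exact .fallG hX ih
  | g Y A =>
    induction h with
    | arrow => exact .arrow
    | fallU hX _ ih => exact .fallU hX ih
    | fallG hX hU ih =>
      simp only [UTy.applySub, UTy.substG] at ih ⊢
      split_ifs
      exacts [.fallG hX hU, .fallG hX ih]

end BindersFresh

variable [CommRing S]

theorem UEquiv.bindersFresh_iff {F : Set (Bool × ℕ)} {U V : UTy S} (h : UEquiv U V) :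
    BindersFresh F U ↔ BindersFresh F V := by
  induction h using UEquiv.rec (motive_2 := fun _ _ _ => True) with
  | refl => rfl
  | symm _ ih => exact ih.symm
  | trans _ _ ih ih' => exact ih.trans ih'
  | arrow => exact ⟨fun _ => .arrow, fun _ => .arrow⟩
  | fallU _ ih => constructor <;> rintro ⟨⟩ <;> apply BindersFresh.fallU <;> simp_all
  | fallG _ ih => constructor <;> rintro ⟨⟩ <;> apply BindersFresh.fallG <;> simp_all
  | _ => trivial

theorem TEquiv.weight_eq {T R : Ty S} (h : TEquiv T R) : T.weight = R.weight := by
  induction h using TEquiv.rec (motive_1 := fun _ _ _ => True) <;>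
    simp_all only [Ty.weight] <;> ring

/-- Unlike coefficients, occurrences cannot cancel: `α·U + β·U ≡ (α+β)·U` keeps `U` even when
`α + β = 0`. -/
def Ty.support : Ty S → Set (UTy S)
  | .unit U => {V | UEquiv U V}
  | .smul _ T => Ty.support T
  | .add T R => Ty.support T ∪ Ty.support R
  | .gvar _ => ∅

theorem TEquiv.support_eq {T R : Ty S} (h : TEquiv T R) : T.support = R.support := by
  induction h using TEquiv.rec (motive_1 := fun _ _ _ => True) with
  | unit hUV => ext W; exact ⟨hUV.symm.trans, hUV.trans⟩
  | comm => exact Set.union_comm _ _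
  | assoc => exact (Set.union_assoc _ _ _).symm
  | _ => simp_all [Ty.support]

theorem combo_append_tequiv {A B : List (S × Ty S)} (hA : A ≠ []) (hB : B ≠ []) :
    TEquiv (combo (A ++ B)) (.add (combo A) (combo B)) := by
  induction A with
  | nil => contradiction
  | cons p A ih =>
    rcases eq_or_ne A [] with rfl | hA'
    · rw [List.singleton_append, combo_cons p hB]
      exact TEquiv.refl _
    · rw [List.cons_append, combo_cons p (by simp [hA']), combo_cons p hA']
      exact (TEquiv.addR (ih hA')).trans TEquiv.assoc

theorem combo_map_smul_tequiv (a : S) {L : List (S × Ty S)} (hL : L ≠ []) :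
    TEquiv (combo (L.map fun p => (a * p.1, p.2))) (.smul a (combo L)) := by
  induction L with
  | nil => contradiction
  | cons p L ih =>
    rcases eq_or_ne L [] with rfl | hL'
    · exact TEquiv.symm TEquiv.smul_smul
    · rw [List.map_cons, combo_cons _ (by simp [hL']), combo_cons p hL']
      exact ((TEquiv.addL (TEquiv.symm TEquiv.smul_smul)).trans (TEquiv.addR (ih hL'))).trans
        TEquiv.smul_add

theorem weight_combo {L : List (S × Ty S)} (hL : L ≠ []) :
    (combo L).weight = (L.map fun p => p.1 * p.2.weight).sum := by
  induction L with
  | nil => contradiction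
  | cons p L ih =>
    rcases eq_or_ne L [] with rfl | hL'
    · simp [combo, Ty.weight]
    · simp [combo_cons p hL', Ty.weight, ih hL']

theorem support_combo {L : List (S × Ty S)} (hL : L ≠ []) :
    (combo L).support = ⋃ p ∈ L, p.2.support := by
  induction L with
  | nil => contradiction
  | cons p L ih =>
    rcases eq_or_ne L [] with rfl | hL'
    · simp [combo, Ty.support]
    · simp [combo_cons p hL', Ty.support, ih hL']

theorem weightOf_map_snd {α β : Type} (f : α → β) (L : List (S × α)) :
    weightOf (L.map fun p => (p.1, f p.2)) = weightOf L := by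
  simp [weightOf, Function.comp_def]

theorem weight_unitCombo {K : List (S × UTy S)} (hK : K ≠ []) :
    (unitCombo K).weight = weightOf K := by
  simp [unitCombo, weight_combo, hK, Ty.weight, weightOf, Function.comp_def]

theorem mem_support_unitCombo {K : List (S × UTy S)} (hK : K ≠ []) {V : UTy S} :
    V ∈ (unitCombo K).support ↔ ∃ p ∈ K, UEquiv p.2 V := by
  simp [unitCombo, support_combo, hK, Ty.support]

def UnitDecomp (Q : UTy S → Prop) (w : S) (T : Ty S) : Prop :=
  ∃ K : List (S × UTy S), K ≠ [] ∧ TEquiv T (unitCombo K) ∧ weightOf K = w ∧ ∀ p ∈ K, Q p.2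

namespace UnitDecomp

variable {Q : UTy S → Prop} {w w' : S} {T R : Ty S}

theorem tequiv (h : UnitDecomp Q w T) (hTR : TEquiv T R) : UnitDecomp Q w R :=
  let ⟨K, hK, hT, hw, hQ⟩ := h
  ⟨K, hK, hTR.symm.trans hT, hw, hQ⟩

theorem unit {U : UTy S} (hU : Q U) : UnitDecomp Q 1 (.unit U) :=
  ⟨[(1, U)], by simp, (TEquiv.one_smul _).symm, by simp [weightOf], by simpa using hU⟩

theorem smul (a : S) (h : UnitDecomp Q w T) : UnitDecomp Q (a * w) (.smul a T) := by
  obtain ⟨K, hK, hT, rfl, hQ⟩ := h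
  refine ⟨K.map fun p => (a * p.1, p.2), by simpa using hK, ?_, ?_, List.forall_mem_map.2 hQ⟩
  · have hscale := combo_map_smul_tequiv a (L := K.map fun p => (p.1, .unit p.2))
      (by simpa using hK)
    simp only [List.map_map, Function.comp_def] at hscale
    exact (TEquiv.smul hT).trans (by simpa [unitCombo, Function.comp_def] using hscale.symm)
  · simp [weightOf, Function.comp_def, List.sum_map_mul_left]

theorem add (h : UnitDecomp Q w T) (h' : UnitDecomp Q w' R) :
    UnitDecomp Q (w + w') (.add T R) := by
  obtain ⟨K, hK, hT, rfl, hQ⟩ := h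
  obtain ⟨K', hK', hR, rfl, hQ'⟩ := h'
  refine ⟨K ++ K', by simp [hK], ?_, by simp [weightOf],
    fun p hp => (List.mem_append.1 hp).elim (hQ p) (hQ' p)⟩
  have happ := combo_append_tequiv (A := K.map fun p => (p.1, .unit p.2))
    (B := K'.map fun p => (p.1, .unit p.2)) (by simpa using hK) (by simpa using hK')
  rw [← List.map_append] at happ
  exact ((TEquiv.addL hT).trans (TEquiv.addR hR)).trans happ.symm

end UnitDecomp

theorem unitDecomp_combo {Q : UTy S → Prop} {L : List (S × Ty S)} (hL : L ≠ [])
    (h : ∀ p ∈ L, UnitDecomp Q 1 p.2) : UnitDecomp Q (weightOf L) (combo L) := by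
  induction L with
  | nil => contradiction
  | cons p L ih =>
    have hp := (h p (by simp)).smul p.1
    rw [mul_one] at hp
    rcases eq_or_ne L [] with rfl | hL'
    · simpa [weightOf, combo] using hp
    · rw [combo_cons p hL', weightOf, List.map_cons, List.sum_cons]
      exact hp.add (ih hL' fun q hq => h q (by simp [hq]))

theorem unitDecomp_unitCombo_iff {Q : UTy S → Prop} (hQ : ∀ {U V}, UEquiv U V → Q U → Q V)
    {K : List (S × UTy S)} (hK : K ≠ []) {w : S} :
    UnitDecomp Q w (unitCombo K) ↔ weightOf K = w ∧ ∀ p ∈ K, Q p.2 := by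
  refine ⟨fun ⟨K', hK', hKK', hw, hQK'⟩ => ⟨?_, fun p hp => ?_⟩,
    fun ⟨hw, hQK⟩ => ⟨K, hK, TEquiv.refl _, hw, hQK⟩⟩
  · rw [← weight_unitCombo hK, hKK'.weight_eq, weight_unitCombo hK', hw]
  · have hmem : p.2 ∈ (unitCombo K').support := by
      rw [← hKK'.support_eq, mem_support_unitCombo hK]
      exact ⟨p, hp, UEquiv.refl _⟩
    obtain ⟨q, hq, hqp⟩ := (mem_support_unitCombo hK').1 hmem
    exact hQ hqp (hQK' q hq)

theorem unitDecomp_combo_map_unit_iff {Q : UTy S → Prop} (hQ : ∀ {U V}, UEquiv U V → Q U → Q V)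
    (f : UTy S → UTy S) {K : List (S × UTy S)} (hK : K ≠ []) {w : S} :
    UnitDecomp Q w (combo (K.map fun p => (p.1, .unit (f p.2)))) ↔
      weightOf K = w ∧ ∀ p ∈ K, Q (f p.2) := by
  rw [← unitCombo_map_snd, unitDecomp_unitCombo_iff hQ (by simpa using hK), weightOf_map_snd,
    List.forall_mem_map]

/-- The freshness of the outer binders is what lets an `(∀E)` step be recorded as a `≺` step,
which needs `X ∉ FV(Γ)`. -/
def AbsWitness (Γ : Ctx S) (x : ℕ) (t : Term S) (W : UTy S) : Prop :=
  BindersFresh Γ.fv W ∧ ∃ (U : UTy S) (R : Ty S) (𝒱 : Set (Bool × ℕ)),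
    Types (Γ.update x U) t R ∧ Preceq Γ 𝒱 (.unit (.arrow U R)) (.unit W)

namespace AbsWitness

variable {Γ : Ctx S} {x : ℕ} {t : Term S} {W : UTy S}

theorem arrow {U : UTy S} {R : Ty S} (h : Types (Γ.update x U) t R) :
    AbsWitness Γ x t (.arrow U R) :=
  ⟨.arrow, U, R, ∅, h, .equiv (Set.empty_inter _) (TEquiv.refl _)⟩

theorem uequiv {V : UTy S} (hWV : UEquiv W V) (h : AbsWitness Γ x t W) : AbsWitness Γ x t V :=
  let ⟨hW, U, R, _, hty, hpre⟩ := h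
  ⟨hWV.bindersFresh_iff.1 hW, U, R, _, hty,
    hpre.trans (.equiv (Set.empty_inter _) (TEquiv.unit hWV))⟩

theorem applySub {s : TSub S} (h : AbsWitness Γ x t (mkForall s.var W)) :
    AbsWitness Γ x t (W.applySub s) :=
  let ⟨hW, U, R, _, hty, hpre⟩ := h
  ⟨hW.of_mkForall.2.applySub s, U, R, _, hty, hpre.trans <| .prec (Set.empty_inter _) <|
    .elim s [(1, W)] hW.of_mkForall.1 (by simp) (TEquiv.one_smul _).symm
      (by simp only [List.map_cons, List.map_nil, applySub_unit]; exact (TEquiv.one_smul _).symm)⟩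

theorem mkForall {X : Bool × ℕ} (hX : X ∉ Γ.fv) (h : AbsWitness Γ x t W) :
    AbsWitness Γ x t (mkForall X W) :=
  let ⟨hW, U, R, _, hty, hpre⟩ := h
  ⟨hW.mkForall hX, U, R, _, hty, hpre.trans <| .prec (Set.empty_inter _) <|
    .intro X [(1, W)] hX (by simp) (TEquiv.one_smul _).symm (TEquiv.one_smul _).symm⟩

end AbsWitness

inductive IsIterOneSmul (b : Term S) : Term S → Prop where
  | refl : IsIterOneSmul b b
  | smul {u : Term S} {a : S} : IsIterOneSmul b u → a = 1 → IsIterOneSmul b (.smul a u)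

theorem unitDecomp_of_typesN {Γ : Ctx S} {x : ℕ} {t u : Term S} {n : ℕ} {T : Ty S}
    (h : TypesN n Γ u T) (hu : IsIterOneSmul (.lam x t) u) :
    UnitDecomp (AbsWitness Γ x t) 1 T := by
  induction h with
  | ax | arrE | addI => cases hu
  | equiv _ hTR ih => exact (ih hu).tequiv hTR
  | arrI hty =>
    cases hu
    exact .unit (.arrow ⟨_, hty⟩)
  | fallI M X hM hX _ ih =>
    obtain ⟨hw, hMQ⟩ :=
      (unitDecomp_combo_map_unit_iff AbsWitness.uequiv (fun U => U) hM).1 (ih hu)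
    exact (unitDecomp_combo_map_unit_iff AbsWitness.uequiv _ hM).2
      ⟨hw, fun p hp => (hMQ p hp).mkForall hX⟩
  | fallE M s hM _ ih =>
    obtain ⟨hw, hMQ⟩ := (unitDecomp_combo_map_unit_iff AbsWitness.uequiv _ hM).1 (ih hu)
    simp only [applySub_unit]
    exact (unitDecomp_combo_map_unit_iff AbsWitness.uequiv (fun U => U.applySub s) hM).2
      ⟨hw, fun p hp => (hMQ p hp).applySub⟩
  | oneE _ ih => exact ih (hu.smul rfl)
  | sum L hL _ ih =>
    cases hu with
    | smul hu hw =>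
      rw [← hw]
      exact unitDecomp_combo (by simpa using hL) (List.forall_mem_map.2 fun p hp => ih p hp hu)

end

theorem generation_abstractions {S : Type} [CommRing S]
    (Γ : Ctx S) (x : ℕ) (t : Term S) (T : Ty S)
    (h : Types Γ (.lam x t) T) :
    ∃ L : List (S × Ty S), L ≠ [] ∧
      TEquiv T (combo L) ∧ weightOf L = 1 ∧
      ∀ p ∈ L, ∃ (U : UTy S) (R : Ty S) (𝒱 : Set (Bool × ℕ)),
        Types (Γ.update x U) t R ∧
        Preceq Γ 𝒱 (Ty.unit (.arrow U R)) p.2 := by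
  obtain ⟨n, hn⟩ := h
  obtain ⟨K, hK, hT, hw, hKQ⟩ := unitDecomp_of_typesN hn .refl
  refine ⟨K.map fun p : S × UTy S => (p.1, Ty.unit p.2), by simpa using hK, hT,
    by rwa [weightOf_map_snd], List.forall_mem_map.2 fun p hp => ?_⟩
  obtain ⟨-, U, R, 𝒱, hty, hpre⟩ := hKQ p hp
  exact ⟨U, R, 𝒱, hty, hpre⟩
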